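/- Let n ≥ 1 and let λ_1 ≥ λ_2 ≥ ... ≥ λ_n be real numbers with Σ_{i=1}^n λ_i² = 1. Define I₁ = {j : λ_1 − λ_j > 1}, I₂ = {i : λ_i − λ_n > 1}, and I = {(i,j) : 1 ≤ i ≤ j ≤ n, λ_i − λ_j > 1}. Then either I = {1} × I₁ or I = I₂ × {n}. -/
import Mathlib


open BigOperators

lemma sum_two_le {n : ℕ} (f : Fin n → ℝ) (hf : ∀ i, 0 ≤ f i) (a b : Fin n)
    (hab : a ≠ b) : f a + f b ≤ ∑ i, f i := by
  have h := Finset.sum_le_sum_of_subset_of_nonneg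
    (Finset.subset_univ ({a, b} : Finset (Fin n))) (fun i _ _ => hf i)
  rwa [Finset.sum_pair hab] at h

lemma sum_four_le {n : ℕ} (f : Fin n → ℝ) (hf : ∀ i, 0 ≤ f i) (a b c d : Fin n)
    (hab : a ≠ b) (hac : a ≠ c) (had : a ≠ d) (hbc : b ≠ c) (hbd : b ≠ d)
    (hcd : c ≠ d) : f a + f b + f c + f d ≤ ∑ i, f i := by
  have h := Finset.sum_le_sum_of_subset_of_nonneg
    (Finset.subset_univ ({a, b, c, d} : Finset (Fin n))) (fun i _ _ => hf i)
  rw [show ({a, b, c, d} : Finset (Fin n)) = insert a (insert b (insert c {d}))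
    from rfl] at h
  rw [Finset.sum_insert (by simp [hab, hac, had]),
    Finset.sum_insert (by simp [hbc, hbd]),
    Finset.sum_insert (by simp [hcd]), Finset.sum_singleton] at h
  linarith

lemma core_lemma (n : ℕ) (lam : Fin n → ℝ) (hmono : Antitone lam)
    (hsum : ∑ i, (lam i) ^ 2 = 1)
    (i j : Fin n) (hij : i ≤ j) (h1 : lam i - lam j > 1) (hi : (i : ℕ) ≠ 0)
    (i' j' : Fin n) (hij' : i' ≤ j') (h2 : lam i' - lam j' > 1) :
    (j' : ℕ) = n - 1 := by
  by_contra hj'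
  have hij0 : (i : ℕ) < j := by
    rcases lt_or_eq_of_le hij with h | h
    · exact h
    · rw [h] at h1; simp at h1; linarith
  have hij'0 : (i' : ℕ) < j' := by
    rcases lt_or_eq_of_le hij' with h | h
    · exact h
    · rw [h] at h2; simp at h2; linarith
  have hj'lt : (j' : ℕ) < n := j'.isLt
  have hjlt : (j : ℕ) < n := j.isLt
  have hn3 : 3 ≤ n := by omega
  set z : Fin n := ⟨0, by omega⟩ with hz
  set o : Fin n := ⟨1, by omega⟩ with ho
  set m2 : Fin n := ⟨n - 2, by omega⟩ with hm2
  set m1 : Fin n := ⟨n - 1, by omega⟩ with hm1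
  have hzm2 : lam z - lam m2 > 1 := by
    have hA : lam i' ≤ lam z := hmono (by simp [Fin.le_def, hz])
    have hB : lam m2 ≤ lam j' := hmono (by simp [Fin.le_def, hm2]; omega)
    linarith
  have hom1 : lam o - lam m1 > 1 := by
    have hA : lam i ≤ lam o := hmono (by simp [Fin.le_def, ho]; omega)
    have hB : lam m1 ≤ lam j := hmono (by simp [Fin.le_def, hm1]; omega)
    linarith
  by_cases h4 : n = 3
  · have hom : lam o = lam m2 := by
      congr 1
      apply Fin.ext
      simp [ho, hm2, h4]
    have hbig : lam z - lam m1 > 2 := by linarith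
    have hsq : lam z ^ 2 + lam m1 ^ 2 ≤ 1 := by
      have key : lam z ^ 2 + lam m1 ^ 2 ≤ ∑ i, lam i ^ 2 :=
        sum_two_le (fun i => lam i ^ 2) (fun i => sq_nonneg _) z m1
          (by simp [hz, hm1, Fin.ext_iff]; omega)
      linarith [hsum ▸ key]
    nlinarith [sq_nonneg (lam z + lam m1)]
  · have hn4 : 4 ≤ n := by omega
    have hsq : lam z ^ 2 + lam o ^ 2 + lam m2 ^ 2 + lam m1 ^ 2 ≤ 1 := by
      have key : lam z ^ 2 + lam o ^ 2 + lam m2 ^ 2 + lam m1 ^ 2 ≤ ∑ i, lam i ^ 2 :=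
        sum_four_le (fun i => lam i ^ 2) (fun i => sq_nonneg _) z o m2 m1
          (by simp [hz, ho, Fin.ext_iff]) (by simp [hz, hm2, Fin.ext_iff]; omega)
          (by simp [hz, hm1, Fin.ext_iff]; omega)
          (by simp [ho, hm2, Fin.ext_iff]; omega)
          (by simp [ho, hm1, Fin.ext_iff]; omega)
          (by simp [hm2, hm1, Fin.ext_iff]; omega)
      linarith [hsum ▸ key]
    nlinarith [sq_nonneg (lam z + lam m2), sq_nonneg (lam o + lam m1)]

/-- Lemma 2.1: for `λ₁ ≥ … ≥ λ_n` with `∑ λᵢ² = 1`, the set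
`I = {(i,j) : i ≤ j, λᵢ − λⱼ > 1}` equals either `{1} × I₁` or `I₂ × {n}`, where
`I₁ = {j : λ₁ − λⱼ > 1}` and `I₂ = {i : λᵢ − λ_n > 1}` (indices are 0-based). -/
theorem I_eq_first_row_or_last_column (n : ℕ) (hn : 1 ≤ n) (lam : Fin n → ℝ)
    (hmono : Antitone lam) (hsum : ∑ i, (lam i) ^ 2 = 1) :
    {p : Fin n × Fin n | p.1 ≤ p.2 ∧ lam p.1 - lam p.2 > 1} =
      (fun j => ((⟨0, by omega⟩ : Fin n), j)) ''
        {j : Fin n | lam ⟨0, by omega⟩ - lam j > 1} ∨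
    {p : Fin n × Fin n | p.1 ≤ p.2 ∧ lam p.1 - lam p.2 > 1} =
      (fun i => (i, (⟨n - 1, by omega⟩ : Fin n))) ''
        {i : Fin n | lam i - lam ⟨n - 1, by omega⟩ > 1} := by
  by_cases hc : ∀ a b : Fin n, a ≤ b → lam a - lam b > 1 → (a : ℕ) = 0
  · left
    ext ⟨a, b⟩
    simp only [Set.mem_setOf_eq, Set.mem_image, Prod.mk.injEq]
    constructor
    · rintro ⟨h1, h2⟩
      have ha : a = (⟨0, by omega⟩ : Fin n) := Fin.ext (hc a b h1 h2)
      exact ⟨b, by rw [← ha]; exact h2, by rw [ha], rfl⟩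
    · rintro ⟨x, hx, h0, hb⟩
      subst hb; subst h0
      exact ⟨by simp [Fin.le_def], hx⟩
  · right
    push_neg at hc
    obtain ⟨i, j, hij, h1, hi⟩ := hc
    ext ⟨a, b⟩
    simp only [Set.mem_setOf_eq, Set.mem_image, Prod.mk.injEq]
    constructor
    · rintro ⟨h1', h2'⟩
      have hb : b = (⟨n - 1, by omega⟩ : Fin n) :=
        Fin.ext (core_lemma n lam hmono hsum i j hij h1 hi a b h1' h2')
      exact ⟨a, by rw [← hb]; exact h2', rfl, by rw [hb]⟩
    · rintro ⟨x, hx, ha, hb⟩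
      subst ha; subst hb
      exact ⟨by simp [Fin.le_def]; omega, hx⟩
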